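/- arXiv:1512.06978 — 9 statements merged into one kernel-verified Lean document; each statement's English description precedes it below -/
import Mathlib

section
/- Let g(∂,λ) ∈ ℂ[∂,λ] be a polynomial in two variables satisfying (∂+λ+μ)·g(∂,λ) = (∂+2μ)·g(∂+μ,λ) for all values of the formal variables ∂, λ, μ. Then g = 0. -/
theorem MvPolynomial.eq_zero_of_forall_mul_eval_eq_zero {σ R : Type*} [CommRing R] [IsDomain R]
    [Infinite R] (i : σ) (g : MvPolynomial σ R) (h : ∀ x : σ → R, x i * eval x g = 0) :
    g = 0 := by
  have hXg : X i * g = 0 := funext fun x => by simpa using h x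
  exact (mul_eq_zero.mp hXg).resolve_left (X_ne_zero i)

/-- If g(∂,λ) ∈ ℂ[∂,λ] satisfies (∂+λ+μ)·g(∂,λ) = (∂+2μ)·g(∂+μ,λ) identically
(as polynomials in ∂,λ,μ, equivalently for all complex values since ℂ is infinite),
then g = 0. -/
theorem stmt_0 (g : MvPolynomial (Fin 2) ℂ)
    (h : ∀ d l m : ℂ,
      (d + l + m) * MvPolynomial.eval ![d, l] g
        = (d + 2 * m) * MvPolynomial.eval ![d + m, l] g) :
    g = 0 := by
  refine MvPolynomial.eq_zero_of_forall_mul_eval_eq_zero 1 g fun x => ?_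
  -- at μ = 0 the identity collapses to λ · g(∂, λ) = 0
  have hμ := h (x 0) (x 1) 0
  rw [add_zero, mul_zero, add_zero, show ![x 0, x 1] = x from List.ofFn_inj.mp rfl] at hμ
  linear_combination hμ
end

section
/- Let g(∂,λ) ∈ ℂ[∂,λ] satisfy (∂+λ+μ)·g(∂,λ) = (∂+(3/2)μ)·g(∂+μ,λ) as polynomials in ∂, λ, μ. Then g = 0. -/
/-!
Specialising `μ = -2∂/3` kills the right-hand side, leaving `(∂/3 + λ) · g(∂, λ) = 0` for all
`∂, λ`. So the product `(∂ + 3λ) · g` vanishes as a function on `ℂ²`, hence is the zero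
polynomial, and `g = 0` because `ℂ[∂, λ]` is a domain.
-/

namespace MvPolynomial

theorem eq_zero_of_eval_mul_eval_eq_zero {R σ : Type*} [CommRing R] [IsDomain R] [Infinite R]
    {p g : MvPolynomial σ R} (hp : p ≠ 0) (h : ∀ x, eval x p * eval x g = 0) : g = 0 := by
  have hpg : p * g = 0 := funext fun x => by simpa using h x
  exact (mul_eq_zero.mp hpg).resolve_left hp

end MvPolynomial

open MvPolynomial

/-- If g(∂,λ) ∈ ℂ[∂,λ] satisfies (∂+λ+μ)·g(∂,λ) = (∂+(3/2)μ)·g(∂+μ,λ) identically,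
then g = 0. -/
theorem stmt_1 (g : MvPolynomial (Fin 2) ℂ)
    (h : ∀ d l m : ℂ,
      (d + l + m) * MvPolynomial.eval ![d, l] g
        = (d + (3/2) * m) * MvPolynomial.eval ![d + m, l] g) :
    g = 0 := by
  have hvanish : ∀ d l : ℂ, (d + 3 * l) * eval ![d, l] g = 0 := fun d l => by
    linear_combination 3 * h d l (-(2/3) * d)
  have heval : ∀ x : Fin 2 → ℂ, eval x (X 0 + 3 * X 1) = x 0 + 3 * x 1 := fun x => by simp
  refine eq_zero_of_eval_mul_eval_eq_zero (p := X 0 + 3 * X 1) ?_ fun x => ?_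
  · intro hp
    simpa using congrArg (eval ![1, 0]) hp
  · have hx : ![x 0, x 1] = x := by ext i; fin_cases i <;> rfl
    rw [heval, ← hx]
    exact hvanish (x 0) (x 1)
end

section
/- Suppose (c_{i,j})_{i,j∈ℤ} are complex numbers with c_{i,j} = -c_{j,i} for all i,j, and suppose there exist complex numbers (b_{i,j}) such that for all i,j ∈ ℤ the polynomial identity (λ-μ)·b_{i+j,0}·(λ+μ)² = ((1/2)λ+(3/2)μ)·c_{i,j}·λ² − ((1/2)μ+(3/2)λ)·c_{j,i}·μ² holds in ℂ[λ,μ]. Then c_{i,j} = 0 and b_{i+j,0} = 0 for all i,j ∈ ℤ. -/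
theorem eq_zero_of_forall_cubic_eq {K : Type*} [Field K] [NeZero (2 : K)] (x y z : K)
    (h : ∀ l m : K, (l - m) * z * (l + m) ^ 2
      = ((1/2) * l + (3/2) * m) * x * l ^ 2 - ((1/2) * m + (3/2) * l) * y * m ^ 2) :
    x = 0 ∧ z = 0 := by
  have hdiag := h 1 1
  have hanti := h 1 (-1)
  have hz := h 1 0
  field_simp at hdiag hanti hz
  have hx : x = 0 := by
    have : 2 ^ 3 * x = 0 := by linear_combination -hdiag + 2 * hanti
    simpa [two_ne_zero] using this
  exact ⟨hx, by simpa [hx, two_ne_zero] using hz⟩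

theorem stmt_6_general (c b : ℤ → ℤ → ℂ)
    (h : ∀ i j : ℤ, ∀ l m : ℂ,
      (l - m) * b (i + j) 0 * (l + m) ^ 2
        = ((1/2) * l + (3/2) * m) * c i j * l ^ 2
          - ((1/2) * m + (3/2) * l) * c j i * m ^ 2) :
    ∀ i j : ℤ, c i j = 0 ∧ b (i + j) 0 = 0 :=
  fun i j => eq_zero_of_forall_cubic_eq _ _ _ (h i j)

/-- If c_{i,j} = -c_{j,i} and (λ-μ)·b_{i+j,0}·(λ+μ)² =
((1/2)λ+(3/2)μ)·c_{i,j}·λ² − ((1/2)μ+(3/2)λ)·c_{j,i}·μ² holds as polynomials in λ,μ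
(equivalently for all complex values), then c and the relevant b's vanish. -/
theorem stmt_6 (c b : ℤ → ℤ → ℂ)
    (hskew : ∀ i j : ℤ, c i j = - c j i)
    (h : ∀ i j : ℤ, ∀ l m : ℂ,
      (l - m) * b (i + j) 0 * (l + m) ^ 2
        = ((1/2) * l + (3/2) * m) * c i j * l ^ 2
          - ((1/2) * m + (3/2) * l) * c j i * m ^ 2) :
    ∀ i j : ℤ, c i j = 0 ∧ b (i + j) 0 = 0 :=
  stmt_6_general c b h
end

section
/- Conversely, for any function a: ℤ → ℂ, the bilinear map φ on csv defined by φ_λ(L_i,L_j) = a_{i+j}λ³ and zero on all other pairs of basis generators (extended sesquilinearly) is a 2-cocycle on the loop Schrödinger–Virasoro Lie conformal algebra. -/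
open Polynomial

/-- Generators of the loop Schrödinger–Virasoro Lie conformal algebra csv. -/
inductive Gen : Type
  | L : ℤ → Gen
  | M : ℤ → Gen
  | Y : ℤ → Gen
  deriving DecidableEq

/-- The λ-bracket of generators of csv (λ evaluated at `l`, ∂ = `X`). -/
noncomputable def br (l : ℂ) : Gen → Gen → (Gen →₀ Polynomial ℂ)
  | Gen.L i, Gen.L j => Finsupp.single (Gen.L (i + j)) (X + C (2 * l))
  | Gen.L i, Gen.M j => Finsupp.single (Gen.M (i + j)) (X + C l)
  | Gen.M i, Gen.L j => Finsupp.single (Gen.M (i + j)) (C l)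
  | Gen.L i, Gen.Y j => Finsupp.single (Gen.Y (i + j)) (X + C ((3/2) * l))
  | Gen.Y i, Gen.L j => Finsupp.single (Gen.Y (i + j)) (C (1/2) * X + C ((3/2) * l))
  | Gen.Y i, Gen.Y j => Finsupp.single (Gen.M (i + j)) (X + C (2 * l))
  | _, _ => 0

/-- The bilinear map φ^a with φ^a_λ(L_i,L_j) = a_{i+j}λ³ (as a polynomial in λ)
and zero on all other pairs of generators. -/
noncomputable def phiA (a : ℤ → ℂ) : Gen → Gen → Polynomial ℂ
  | Gen.L i, Gen.L j => C (a (i + j)) * X ^ 3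
  | _, _ => 0

/-
φ^a vanishes unless both arguments are of type L, and a bracket has an L-component only when both
of its arguments are of type L. So every term of the Jacobi identity vanishes unless
x = L_i, y = L_j, z = L_k, where it reduces to the polynomial identity
(λ - μ)(λ + μ)³ = (λ + 2μ)λ³ - (2λ + μ)μ³. Skew-symmetry holds because λ³ is odd.
-/

def Gen.IsL (x : Gen) : Prop := ∃ i, x = Gen.L i

theorem phiA_eq_zero {a : ℤ → ℂ} {x y : Gen} (h : ¬ (x.IsL ∧ y.IsL)) : phiA a x y = 0 := by
  cases x <;> cases y <;> simp_all [phiA, Gen.IsL]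

theorem Gen.IsL.isL_and_isL_of_mem_support_br {l : ℂ} {x y g : Gen} (hg : g.IsL)
    (hmem : g ∈ (br l x y).support) : x.IsL ∧ y.IsL := by
  obtain ⟨n, rfl⟩ := hg
  cases x <;> cases y <;> simp_all [br, Gen.IsL]

theorem phiA_eval_neg (a : ℤ → ℂ) (x y : Gen) (l : ℂ) :
    (phiA a x y).eval l = -((phiA a y x).eval (-l)) := by
  cases x <;> cases y <;> simp [phiA, add_comm, Odd.neg_pow (by decide : Odd 3)]

section NotAllL

variable (a : ℤ → ℂ) {x y z : Gen} (l c d : ℂ)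

theorem sum_br_phiA_left_eq_zero (h : ¬ (x.IsL ∧ y.IsL ∧ z.IsL)) :
    ((br l x y).sum fun g p => p.eval c * (phiA a g z).eval d) = 0 :=
  Finset.sum_eq_zero fun g hg => by
    dsimp only
    rw [phiA_eq_zero fun ⟨hgL, hzL⟩ =>
      h (and_assoc.mp ⟨hgL.isL_and_isL_of_mem_support_br hg, hzL⟩)]
    simp

theorem sum_br_phiA_right_eq_zero (h : ¬ (x.IsL ∧ y.IsL ∧ z.IsL)) :
    ((br l y z).sum fun g p => p.eval c * (phiA a x g).eval d) = 0 :=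
  Finset.sum_eq_zero fun g hg => by
    dsimp only
    rw [phiA_eq_zero fun ⟨hxL, hgL⟩ => h ⟨hxL, hgL.isL_and_isL_of_mem_support_br hg⟩]
    simp

end NotAllL

/-- The sums encode the Jacobi identity through sesquilinearity:
φ_ν(p(∂)g, z) = p(−ν)φ_ν(g,z) and φ_ν(x, p(∂)g) = p(ν)φ_ν(x,g). -/
theorem stmt_11 (a : ℤ → ℂ) :
    (∀ (x y : Gen) (l : ℂ), (phiA a x y).eval l = -((phiA a y x).eval (-l)))
    ∧ (∀ (x y z : Gen) (l m : ℂ),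
        ((br l x y).sum fun h p => p.eval (-(l + m)) * (phiA a h z).eval (l + m))
          = ((br m y z).sum fun h p => p.eval l * (phiA a x h).eval l)
            - ((br l x z).sum fun h p => p.eval m * (phiA a y h).eval m)) := by
  refine ⟨phiA_eval_neg a, fun x y z l m => ?_⟩
  by_cases hL : x.IsL ∧ y.IsL ∧ z.IsL
  · obtain ⟨⟨i, rfl⟩, ⟨j, rfl⟩, ⟨k, rfl⟩⟩ := hL
    simp only [br, phiA]
    rw [Finsupp.sum_single_index (by simp), Finsupp.sum_single_index (by simp),
      Finsupp.sum_single_index (by simp)]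
    simp only [eval_add, eval_X, eval_C, eval_mul, eval_pow, add_assoc, add_left_comm j i k]
    ring
  · rw [sum_br_phiA_left_eq_zero a l _ _ hL, sum_br_phiA_right_eq_zero a m _ _ hL,
      sum_br_phiA_right_eq_zero a l _ _ fun ⟨hy, hx, hz⟩ => hL ⟨hx, hy, hz⟩, sub_zero]
end

section
/- Every nontrivial free conformal module of rank one over the loop Schrödinger–Virasoro Lie conformal algebra csv is isomorphic to M_{a,b,c,0,0} = ℂ[∂]v with actions L_i λ v = c^i(∂+aλ+b)v, M_i λ v = 0, Y_i λ v = 0 for some a,b ∈ ℂ and c ∈ ℂ*. In particular, on any free rank-one conformal csv-module, the elements M_i and Y_i necessarily act trivially. -/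
/-!
Write `g_λ v = act λ g`. At `μ = 0` the relation for `[L₀ λ g] = (∂ + w_g λ) g`, where `w_g` is
the conformal weight of `g`, reads `(g_0(∂ + λ) - g_0(∂)) · (L₀)_λ v = (w_g - 1) λ · g_λ v`.
Once `(L₀)_λ v = ∂ + aλ + b`, comparing coefficients of `∂ ^ deg g_0` and letting `λ → 0` gives
`deg g_0 = w_g - 1` unless `g_0 = 0`: so each `L_j` acts as a multiple of `L₀`, and `Y_j`
(weight `3/2`) acts trivially, hence so does `M_j` by `[Y λ Y] = (∂ + 2λ) M`.
The form of `(L₀)_λ v` comes from `[L₀ λ L₀]`: its subleading `∂`-coefficient forces `∂`-degree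
at most `1`, and the two coefficients then satisfy functional equations in `λ` whose only
polynomial solutions are `1` and `aλ + b`.
-/

open Polynomial

open Filter

namespace Polynomial

variable {R : Type*} [CommRing R]

theorem coeff_comp_X_add_C_of_natDegree_le_succ {p : R[X]} {n : ℕ} (hp : p.natDegree ≤ n + 1)
    (t : R) : (p.comp (X + C t)).coeff n = p.coeff n + (n + 1) * t * p.coeff (n + 1) := by
  have hdeg : (hasseDeriv n p).natDegree < 2 := by
    have := natDegree_hasseDeriv_le p n
    omega
  rw [← taylor_apply, taylor_coeff, eval_eq_sum_range' hdeg]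
  simp [Finset.sum_range_succ, hasseDeriv_coeff, Nat.choose_succ_self_right, add_comm 1 n]
  ring

theorem coeff_comp_X_add_C_of_natDegree_le {p : R[X]} {n : ℕ} (hp : p.natDegree ≤ n) (t : R) :
    (p.comp (X + C t)).coeff n = p.coeff n := by
  rw [coeff_comp_X_add_C_of_natDegree_le_succ (hp.trans n.le_succ),
    coeff_eq_zero_of_natDegree_lt (Nat.lt_succ_of_le hp), mul_zero, add_zero]

theorem coeff_mul_add_add_one {a b : R[X]} {m n : ℕ} (ha : a.natDegree ≤ m + 1)
    (hb : b.natDegree ≤ n + 1) :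
    (a * b).coeff (m + n + 1) = a.coeff (m + 1) * b.coeff n + a.coeff m * b.coeff (n + 1) := by
  rw [coeff_mul, Finset.sum_eq_add_of_mem (m + 1, n) (m, n + 1) (by simp; omega) (by simp; omega)
    (by simp)]
  rintro ⟨i, j⟩ hij ⟨h₁, h₂⟩
  rw [Finset.HasAntidiagonal.mem_antidiagonal] at hij
  dsimp only
  rcases lt_or_ge (m + 1) i with hi | hi
  · rw [coeff_eq_zero_of_natDegree_lt (ha.trans_lt hi), zero_mul]
  · have hj : n + 1 < j := by simp only [ne_eq, Prod.mk.injEq] at h₁ h₂; omega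
    rw [coeff_eq_zero_of_natDegree_lt (hb.trans_lt hj), mul_zero]

theorem coeff_comp_mul_sub_comp_mul {p q : R[X]} {n : ℕ} (hp : p.natDegree ≤ n + 1)
    (hq : q.natDegree ≤ n + 1) (s t : R) :
    (q.comp (X + C t) * p - p.comp (X + C s) * q).coeff (n + n + 1)
      = (n + 1) * (t - s) * p.coeff (n + 1) * q.coeff (n + 1) := by
  rw [coeff_sub, coeff_mul_add_add_one (by rwa [← taylor_apply, natDegree_taylor]) hp,
    coeff_mul_add_add_one (by rwa [← taylor_apply, natDegree_taylor]) hq,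
    coeff_comp_X_add_C_of_natDegree_le hq, coeff_comp_X_add_C_of_natDegree_le hp,
    coeff_comp_X_add_C_of_natDegree_le_succ hq, coeff_comp_X_add_C_of_natDegree_le_succ hp]
  ring

theorem coeff_natDegree_comp_X_add_C_sub_mul (p : R[X]) (s t : R) :
    ((p.comp (X + C t) - p) * (X + C s)).coeff p.natDegree = p.natDegree * t * p.leadingCoeff := by
  rcases h : p.natDegree with _ | n
  · rw [eq_C_of_natDegree_eq_zero h, C_comp, sub_self, zero_mul, coeff_zero, Nat.cast_zero,
      zero_mul, zero_mul]
  · rw [mul_add, coeff_add, coeff_mul_X, coeff_mul_C, coeff_sub, coeff_sub,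
      coeff_comp_X_add_C_of_natDegree_le_succ h.le, coeff_comp_X_add_C_of_natDegree_le h.le,
      leadingCoeff, h]
    push_cast
    ring

theorem comp_X_add_C_sub_of_natDegree_le_one {p : R[X]} (hp : p.natDegree ≤ 1) (t : R) :
    p.comp (X + C t) - p = C (p.coeff 1 * t) := by
  conv_lhs => rw [eq_X_add_C_of_natDegree_le_one hp]
  simp only [add_comp, mul_comp, C_comp, X_comp, C_mul]
  ring

variable {K : Type*} [Field K]

theorem eq_of_eventually_eval_eq [Infinite K] {p q : K[X]}
    (h : ∀ᶠ x in cofinite, p.eval x = q.eval x) : p = q :=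
  eq_of_infinite_eval_eq p q (frequently_cofinite_iff_infinite.mp h.frequently)

theorem natDegree_le_one_of_mul_eval_sub_mul_eval [CharZero K] {p : K[X]}
    (h : ∀ x y : K, x * p.eval x - y * p.eval y = (x - y) * p.eval (x + y)) :
    p.natDegree ≤ 1 := by
  have hid : X * p - C (p.eval 1) = (X - C 1) * p.comp (X + C 1) :=
    funext fun x => by simpa [add_comm] using h x 1
  by_contra! hp
  obtain ⟨n, hn⟩ : ∃ n, p.natDegree = n + 2 := ⟨p.natDegree - 2, by omega⟩
  have hcoeff := congrArg (coeff · (n + 2)) hid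
  simp only [coeff_sub, coeff_X_mul, coeff_C, coeff_X_sub_C_mul] at hcoeff
  rw [coeff_comp_X_add_C_of_natDegree_le_succ hn.le,
    coeff_comp_X_add_C_of_natDegree_le_succ (by omega),
    coeff_eq_zero_of_natDegree_lt (p := p) (n := n + 1 + 1 + 1) (by omega), if_neg (by omega)]
    at hcoeff
  have hlead : p.coeff (n + 2) ≠ 0 := by
    rw [← hn, coeff_natDegree, leadingCoeff_ne_zero]
    rintro rfl
    simp at hn
  apply mul_ne_zero (Nat.cast_add_one_ne_zero n) hlead
  push_cast at hcoeff
  linear_combination -hcoeff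

theorem natDegree_le_one_of_comp_X_add_C_sub_eq_C [CharZero K] {p : K[X]} {t c : K} (ht : t ≠ 0)
    (h : p.comp (X + C t) - p = C c) : p.natDegree ≤ 1 := by
  by_contra! hp
  obtain ⟨n, hn⟩ : ∃ n, p.natDegree = n + 2 := ⟨p.natDegree - 2, by omega⟩
  have hcoeff := congrArg (coeff · (n + 1)) h
  simp only [coeff_sub, coeff_C, if_neg n.succ_ne_zero] at hcoeff
  rw [coeff_comp_X_add_C_of_natDegree_le_succ hn.le] at hcoeff
  have hlead : p.coeff (n + 2) ≠ 0 := by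
    rw [← hn, coeff_natDegree, leadingCoeff_ne_zero]
    rintro rfl
    simp at hn
  apply mul_ne_zero (mul_ne_zero (Nat.cast_add_one_ne_zero (n + 1)) ht) hlead
  push_cast at hcoeff ⊢
  linear_combination hcoeff

theorem eval_eq_eval_zero_of_forall_eval_ne_zero [IsAlgClosed K] {p : K[X]}
    (h : ∀ x, p.eval x ≠ 0) (x : K) : p.eval x = p.eval 0 := by
  have hdeg : p.degree = 0 := by
    by_contra hp
    obtain ⟨z, hz⟩ := IsAlgClosed.exists_root p hp
    exact h z hz
  rw [eq_C_of_degree_eq_zero hdeg, eval_C, eval_C]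

end Polynomial

theorem eq_zpow_of_map_add {G₀ : Type*} [GroupWithZero G₀] {γ : ℤ → G₀} (h0 : γ 0 = 1)
    (hadd : ∀ i j, γ (i + j) = γ i * γ j) (i : ℤ) : γ i = γ 1 ^ i := by
  have h1 : γ 1 ≠ 0 := left_ne_zero_of_mul_eq_one (by rw [← hadd, add_neg_cancel, h0])
  induction i using Int.induction_on with
  | zero => rw [h0, zpow_zero]
  | succ n ih => rw [hadd, ih, zpow_add_one₀ h1]
  | pred n ih =>
    rw [zpow_sub_one₀ h1, ← ih, eq_mul_inv_iff_mul_eq₀ h1, ← hadd, sub_add_cancel]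

def IsPolyFamily {K : Type*} [CommRing K] (f : K → K[X]) : Prop :=
  ∃ P : K[X][X], ∀ x, f x = P.eval (C x)

namespace IsPolyFamily

variable {K : Type*}

section CommRing

variable [CommRing K] {f : K → K[X]}

theorem const (p : K[X]) : IsPolyFamily fun _ : K => p :=
  ⟨C p, fun _ => (eval_C).symm⟩

theorem const_mul (hf : IsPolyFamily f) (p : K[X]) : IsPolyFamily fun x => p * f x := by
  obtain ⟨P, hP⟩ := hf
  exact ⟨C p * P, fun x => by simp only [hP, eval_mul, eval_C]⟩

theorem exists_coeff (hf : IsPolyFamily f) (n : ℕ) :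
    ∃ q : K[X], ∀ x, (f x).coeff n = q.eval x := by
  obtain ⟨P, hP⟩ := hf
  simp only [hP]
  clear hP
  induction P using Polynomial.induction_on' with
  | add P Q hP hQ =>
    obtain ⟨p, hp⟩ := hP
    obtain ⟨q, hq⟩ := hQ
    exact ⟨p + q, fun x => by rw [eval_add, coeff_add, hp, hq, eval_add]⟩
  | monomial k a =>
    exact ⟨C (a.coeff n) * X ^ k, fun x => by
      rw [eval_monomial, ← C_pow, coeff_mul_C, eval_mul, eval_C, eval_pow, eval_X]⟩

theorem exists_natDegree_le (hf : IsPolyFamily f) : ∃ N, ∀ x, (f x).natDegree ≤ N := by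
  obtain ⟨P, hP⟩ := hf
  refine ⟨(Finset.range (P.natDegree + 1)).sup fun i => (P.coeff i).natDegree, fun x => ?_⟩
  rw [hP, eval_eq_sum_range]
  refine natDegree_sum_le_of_forall_le _ _ fun i hi => ?_
  rw [← C_pow]
  exact (natDegree_mul_C_le _ _).trans (Finset.le_sup (f := fun i => (P.coeff i).natDegree) hi)

end CommRing

variable [Field K] [Infinite K] {f g : K → K[X]}

theorem eq_of_eventuallyEq (hf : IsPolyFamily f) (hg : IsPolyFamily g)
    (h : f =ᶠ[cofinite] g) : f = g := by
  funext x
  ext n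
  obtain ⟨p, hp⟩ := hf.exists_coeff n
  obtain ⟨q, hq⟩ := hg.exists_coeff n
  have hpq : p = q := eq_of_eventually_eval_eq (h.mono fun y hy => by rw [← hp, ← hq, hy])
  rw [hp, hq, hpq]

theorem eq_zero_or_natDegree_eq {κ : K} {s : K → K} (hf : IsPolyFamily f)
    (h : ∀ x, ((f 0).comp (X + C x) - f 0) * (X + C (s x)) = C (κ * x) * f x) :
    f 0 = 0 ∨ ((f 0).natDegree : K) = κ := by
  obtain ⟨q, hq⟩ := hf.exists_coeff (f 0).natDegree
  have hcoeff : ∀ x, x ≠ 0 → κ * q.eval x = (f 0).natDegree * (f 0).leadingCoeff := fun x hx => by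
    have := congrArg (coeff · (f 0).natDegree) (h x)
    simp only [coeff_natDegree_comp_X_add_C_sub_mul, coeff_C_mul, hq] at this
    exact mul_left_cancel₀ hx (by linear_combination -this)
  have hq' : C κ * q = C ((f 0).natDegree * (f 0).leadingCoeff) :=
    eq_of_eventually_eval_eq ((eventually_cofinite_ne 0).mono fun x hx => by
      simpa using hcoeff x hx)
  have h0 := congrArg (eval 0) hq'
  rw [eval_mul, eval_C, eval_C, ← hq, coeff_natDegree] at h0
  have hprod : (κ - (f 0).natDegree) * (f 0).leadingCoeff = 0 := by linear_combination h0
  rcases mul_eq_zero.mp hprod with hκ | hlead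
  · exact Or.inr (by linear_combination -hκ)
  · exact Or.inl (leadingCoeff_eq_zero.mp hlead)

end IsPolyFamily

namespace Gen

noncomputable def weight : Gen → ℂ
  | L _ => 2
  | M _ => 1
  | Y _ => 3 / 2

theorem br_L_zero (l : ℂ) (g : Gen) : br l (L 0) g = Finsupp.single g (X + C (g.weight * l)) := by
  cases g <;> simp [br, weight]

end Gen

structure IsRankOneModule (act : ℂ → Gen → ℂ[X]) : Prop where
  poly : ∀ g, IsPolyFamily fun l => act l g
  compat : ∀ (g₁ g₂ : Gen) (l m : ℂ),
    (act m g₂).comp (X + C l) * act l g₁ - (act l g₁).comp (X + C m) * act m g₂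
      = (br l g₁ g₂).sum fun h p => C (p.eval (-(l + m))) * act (l + m) h

namespace IsRankOneModule

open Gen

variable {act : ℂ → Gen → ℂ[X]}

theorem compat_L_L (h : IsRankOneModule act) (i j : ℤ) (l m : ℂ) :
    (act m (L j)).comp (X + C l) * act l (L i) - (act l (L i)).comp (X + C m) * act m (L j)
      = C (l - m) * act (l + m) (L (i + j)) := by
  rw [h.compat, br, Finsupp.sum_single_index (by simp)]
  simp only [eval_add, eval_X, eval_C]
  ring_nf

theorem compat_Y_Y (h : IsRankOneModule act) (i j : ℤ) (l m : ℂ) :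
    (act m (Y j)).comp (X + C l) * act l (Y i) - (act l (Y i)).comp (X + C m) * act m (Y j)
      = C (l - m) * act (l + m) (M (i + j)) := by
  rw [h.compat, br, Finsupp.sum_single_index (by simp)]
  simp only [eval_add, eval_X, eval_C]
  ring_nf

theorem comp_sub_mul_act_L_zero (h : IsRankOneModule act) (g : Gen) (l : ℂ) :
    ((act 0 g).comp (X + C l) - act 0 g) * act l (L 0) = C ((g.weight - 1) * l) * act l g := by
  have := h.compat (L 0) g l 0
  rw [br_L_zero, Finsupp.sum_single_index (by simp), C_0, add_zero, comp_X, add_zero] at this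
  simp only [eval_add, eval_X, eval_C] at this
  rw [show (g.weight - 1) * l = -l + g.weight * l by ring]
  linear_combination this

theorem act_eq_zero_of_weight_ne_one (h : IsRankOneModule act) {g : Gen} (hg : g.weight ≠ 1)
    (hvan : ∀ l, l ≠ 0 → ((act 0 g).comp (X + C l) - act 0 g) * act l (L 0) = 0) (l : ℂ) :
    act l g = 0 := by
  refine congrFun ((h.poly g).eq_of_eventuallyEq (IsPolyFamily.const 0)
    ((eventually_cofinite_ne 0).mono fun l hl => ?_)) l
  have hw := h.comp_sub_mul_act_L_zero g l
  rw [hvan l hl, eq_comm, mul_eq_zero, C_eq_zero] at hw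
  exact hw.resolve_left (mul_ne_zero (sub_ne_zero.mpr hg) hl)

theorem act_M_eq_zero (h : IsRankOneModule act) (hY : ∀ j l, act l (Y j) = 0) (i : ℤ) (l : ℂ) :
    act l (M i) = 0 := by
  have hYY := h.compat_Y_Y i 0 (l / 2 + 1) (l / 2 - 1)
  simp only [hY, zero_comp, zero_mul, sub_zero, add_zero] at hYY
  rw [show l / 2 + 1 + (l / 2 - 1) = l by ring,
    show l / 2 + 1 - (l / 2 - 1) = 2 by ring, eq_comm, mul_eq_zero, C_eq_zero] at hYY
  exact hYY.resolve_left two_ne_zero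

theorem act_eq_zero_of_act_L_zero (h : IsRankOneModule act) (hL : ∀ l, l ≠ 0 → act l (L 0) = 0)
    (g : Gen) (l : ℂ) : act l g = 0 := by
  have hLY : ∀ g : Gen, g.weight ≠ 1 → ∀ l, act l g = 0 := fun g hg =>
    h.act_eq_zero_of_weight_ne_one hg fun l hl => by rw [hL l hl, mul_zero]
  cases g with
  | L i => exact hLY (L i) (by norm_num [weight]) l
  | M i => exact h.act_M_eq_zero (fun j => hLY (Y j) (by norm_num [weight])) i l
  | Y j => exact hLY (Y j) (by norm_num [weight]) l

theorem exists_act_L_zero_ne_zero (h : IsRankOneModule act) (hnt : ∃ g l, act l g ≠ 0) :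
    ∃ l, l ≠ 0 ∧ act l (L 0) ≠ 0 := by
  by_contra! hL
  obtain ⟨g, l, hgl⟩ := hnt
  exact hgl (h.act_eq_zero_of_act_L_zero hL g l)

theorem act_zero_L_zero (h : IsRankOneModule act) (hF : ∃ l, l ≠ 0 ∧ act l (L 0) ≠ 0) :
    act 0 (L 0) = X + C ((act 0 (L 0)).coeff 0) := by
  obtain ⟨l, hl, hFl⟩ := hF
  have hshift : (act 0 (L 0)).comp (X + C l) - act 0 (L 0) = C l := by
    have := h.comp_sub_mul_act_L_zero (L 0) l
    rw [weight, show ((2 : ℂ) - 1) * l = l by ring] at this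
    exact mul_right_cancel₀ hFl this
  have hdeg := natDegree_le_one_of_comp_X_add_C_sub_eq_C hl hshift
  rw [comp_X_add_C_sub_of_natDegree_le_one hdeg, C_inj] at hshift
  have h1 : (act 0 (L 0)).coeff 1 = 1 := mul_right_cancel₀ hl (by rw [hshift, one_mul])
  conv_lhs => rw [eq_X_add_C_of_natDegree_le_one hdeg, h1, C_1, one_mul]

theorem natDegree_act_L_zero_le_of_le (h : IsRankOneModule act) {n : ℕ}
    (hn : ∀ l, (act l (L 0)).natDegree ≤ n + 2) (l : ℂ) : (act l (L 0)).natDegree ≤ n + 1 := by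
  obtain ⟨q, hq⟩ := (h.poly (L 0)).exists_coeff (n + 1 + 1)
  have hprod : ∀ l, q.eval l * q.eval (l + 1) = 0 := fun l => by
    have hcoeff := congrArg (coeff · (n + 1 + (n + 1) + 1)) (h.compat_L_L 0 0 l (l + 1))
    rw [coeff_comp_mul_sub_comp_mul (hn l) (hn (l + 1)), coeff_C_mul, hq, hq, add_zero,
      coeff_eq_zero_of_natDegree_lt ((hn (l + (l + 1))).trans_lt (by omega))] at hcoeff
    have hne : (((n + 1 : ℕ) : ℂ) + 1) * (l - (l + 1)) ≠ 0 :=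
      mul_ne_zero (Nat.cast_add_one_ne_zero _) (by simp)
    refine mul_left_cancel₀ hne ?_
    linear_combination hcoeff
  have hq0 : q = 0 := by
    have : q * q.comp (X + C 1) = 0 := funext fun l => by simp [add_comm, hprod l]
    rcases mul_eq_zero.mp this with hq | hq
    · exact hq
    · rwa [← taylor_apply, taylor_eq_zero] at hq
  rw [natDegree_le_iff_coeff_eq_zero]
  intro N hN
  rcases (show N = n + 1 + 1 ∨ n + 2 < N by omega) with rfl | hN
  · rw [hq, hq0, eval_zero]
  · exact coeff_eq_zero_of_natDegree_lt ((hn l).trans_lt hN)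

theorem natDegree_act_L_zero_le_one (h : IsRankOneModule act) (l : ℂ) :
    (act l (L 0)).natDegree ≤ 1 := by
  obtain ⟨N, hN⟩ := (h.poly (L 0)).exists_natDegree_le
  induction N with
  | zero => exact (hN l).trans zero_le_one
  | succ N ih =>
    rcases N with _ | n
    · exact hN l
    · exact ih (h.natDegree_act_L_zero_le_of_le hN)

theorem coeff_act_L_zero_add (h : IsRankOneModule act) (l m : ℂ) :
    (act l (L 0)).coeff 1 * (act m (L 0)).coeff 1 * (l - m)
        = (l - m) * (act (l + m) (L 0)).coeff 1 ∧
      (act m (L 0)).coeff 1 * l * (act l (L 0)).coeff 0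
          - (act l (L 0)).coeff 1 * m * (act m (L 0)).coeff 0
        = (l - m) * (act (l + m) (L 0)).coeff 0 := by
  have hLL := h.compat_L_L 0 0 l m
  have hlin := fun x => eq_X_add_C_of_natDegree_le_one (h.natDegree_act_L_zero_le_one x)
  rw [add_zero, hlin l, hlin m, hlin (l + m)] at hLL
  have h0 := congrArg (eval 0) hLL
  have h1 := congrArg (eval 1) hLL
  simp only [eval_sub, eval_mul, eval_add, eval_comp, eval_C, eval_X] at h0 h1
  constructor
  · linear_combination h1 - h0
  · linear_combination h0

theorem act_L_zero_eq (h : IsRankOneModule act) (hF : ∃ l, l ≠ 0 ∧ act l (L 0) ≠ 0) :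
    ∃ a b : ℂ, ∀ l, act l (L 0) = X + C (a * l + b) := by
  obtain ⟨α, hα⟩ := (h.poly (L 0)).exists_coeff 1
  obtain ⟨β, hβ⟩ := (h.poly (L 0)).exists_coeff 0
  have hα0 : α.eval 0 = 1 := by
    rw [← hα, h.act_zero_L_zero hF]
    simp
  have hαne : ∀ l, α.eval l ≠ 0 := fun l hl => by
    rcases eq_or_ne l 0 with rfl | hl0
    · exact one_ne_zero (hα0.symm.trans hl)
    · have := (h.coeff_act_L_zero_add l (-l)).1
      rw [hα, hα, hα, add_neg_cancel, hα0, hl] at this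
      exact mul_ne_zero two_ne_zero hl0 (by linear_combination -this)
  have hα1 : ∀ l, α.eval l = 1 := fun l => by
    rw [eval_eq_eval_zero_of_forall_eval_ne_zero hαne, hα0]
  have hβdeg : β.natDegree ≤ 1 := natDegree_le_one_of_mul_eval_sub_mul_eval fun l m => by
    have := (h.coeff_act_L_zero_add l m).2
    simp only [hα, hβ, hα1] at this
    linear_combination this
  refine ⟨β.coeff 1, β.coeff 0, fun l => ?_⟩
  rw [eq_X_add_C_of_natDegree_le_one (h.natDegree_act_L_zero_le_one l), hα, hα1, hβ,
    eq_X_add_C_of_natDegree_le_one hβdeg]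
  simp

variable {a b : ℂ}

theorem eq_zero_or_natDegree_eq_weight_sub_one (h : IsRankOneModule act)
    (hF : ∀ l, act l (L 0) = X + C (a * l + b)) (g : Gen) :
    act 0 g = 0 ∨ ((act 0 g).natDegree : ℂ) = g.weight - 1 :=
  (h.poly g).eq_zero_or_natDegree_eq (s := fun l => a * l + b) fun l => by
    rw [← hF]
    exact h.comp_sub_mul_act_L_zero g l

theorem act_L_eq (h : IsRankOneModule act) (hF : ∀ l, act l (L 0) = X + C (a * l + b)) (j : ℤ)
    (l : ℂ) : act l (L j) = C ((act 0 (L j)).coeff 1) * act l (L 0) := by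
  have hdeg : (act 0 (L j)).natDegree ≤ 1 := by
    rcases h.eq_zero_or_natDegree_eq_weight_sub_one hF (L j) with h0 | h1
    · simp [h0]
    · norm_num [weight] at h1
      exact h1.le
  refine congrFun ((h.poly (L j)).eq_of_eventuallyEq ((h.poly (L 0)).const_mul _)
    ((eventually_cofinite_ne 0).mono fun l hl => ?_)) l
  have hshift := h.comp_sub_mul_act_L_zero (L j) l
  rw [comp_X_add_C_sub_of_natDegree_le_one hdeg, weight, show ((2 : ℂ) - 1) * l = l by ring,
    C_mul] at hshift
  refine mul_left_cancel₀ (C_ne_zero.mpr hl) ?_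
  linear_combination -hshift

theorem coeff_one_act_zero_L_add (h : IsRankOneModule act)
    (hF : ∀ l, act l (L 0) = X + C (a * l + b)) (i j : ℤ) :
    (act 0 (L (i + j))).coeff 1 = (act 0 (L i)).coeff 1 * (act 0 (L j)).coeff 1 := by
  have hL : ∀ k l, act l (L k) = C ((act 0 (L k)).coeff 1) * (X + C (a * l + b)) :=
    fun k l => by rw [h.act_L_eq hF k l, hF]
  have hLL := h.compat_L_L i j 1 0
  rw [C_0, add_zero, comp_X, add_zero, sub_zero, hL i 1, hL (i + j) 1, hL j 0] at hLL
  simp only [mul_comp, C_comp, add_comp, X_comp, mul_zero, mul_one, zero_add, C_1, one_mul]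
    at hLL
  have hprod : C ((act 0 (L i)).coeff 1 * (act 0 (L j)).coeff 1 - (act 0 (L (i + j))).coeff 1)
      * (X + C (a + b)) = 0 := by
    rw [C_sub, C_mul]
    linear_combination hLL
  rw [mul_eq_zero, C_eq_zero, sub_eq_zero] at hprod
  exact (hprod.resolve_right (X_add_C_ne_zero _)).symm

theorem act_Y_eq_zero (h : IsRankOneModule act) (hF : ∀ l, act l (L 0) = X + C (a * l + b))
    (j : ℤ) (l : ℂ) : act l (Y j) = 0 := by
  have h0 : act 0 (Y j) = 0 := by
    refine (h.eq_zero_or_natDegree_eq_weight_sub_one hF (Y j)).resolve_right fun hk => ?_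
    have hcast : ((2 * (act 0 (Y j)).natDegree : ℕ) : ℂ) = (1 : ℕ) := by
      rw [weight] at hk
      push_cast
      linear_combination 2 * hk
    have := Nat.cast_injective hcast
    omega
  exact h.act_eq_zero_of_weight_ne_one (by norm_num [weight])
    (fun l _ => by rw [h0, zero_comp, sub_zero, zero_mul]) l

end IsRankOneModule

/-- Classification of nontrivial free rank-one conformal csv-modules M = ℂ[∂]v.
The λ-action of a generator g on v is (act l g)·v ∈ ℂ[∂]v with λ evaluated at l;
it is polynomial in λ (hpoly), satisfies the conformal module compatibility
g₁ λ (g₂ μ v) − g₂ μ (g₁ λ v) = [g₁ λ g₂]_{λ+μ} v on the free generator v (hcomp),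
and is nontrivial (hnontriv).  Then the module is M_{a,b,c,0,0}:
L_i λ v = c^i(∂+aλ+b)v, M_i λ v = 0, Y_i λ v = 0 for some a,b ∈ ℂ, c ∈ ℂ*. -/
theorem stmt_13 (act : ℂ → Gen → Polynomial ℂ)
    (hpoly : ∀ g : Gen, ∃ P : Polynomial (Polynomial ℂ),
      ∀ l : ℂ, act l g = P.eval (C l))
    (hcomp : ∀ (g₁ g₂ : Gen) (l m : ℂ),
      (act m g₂).comp (X + C l) * act l g₁ - (act l g₁).comp (X + C m) * act m g₂
        = (br l g₁ g₂).sum fun h p => C (p.eval (-(l + m))) * act (l + m) h)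
    (hnontriv : ∃ (g : Gen) (l : ℂ), act l g ≠ 0) :
    ∃ (a b : ℂ) (c : ℂ), c ≠ 0
      ∧ (∀ (i : ℤ) (l : ℂ), act l (Gen.L i) = C (c ^ i) * (X + C (a * l + b)))
      ∧ (∀ (i : ℤ) (l : ℂ), act l (Gen.M i) = 0)
      ∧ (∀ (i : ℤ) (l : ℂ), act l (Gen.Y i) = 0) := by
  have hM : IsRankOneModule act := ⟨hpoly, hcomp⟩
  obtain ⟨a, b, hF⟩ := hM.act_L_zero_eq (hM.exists_act_L_zero_ne_zero hnontriv)
  have hγ0 : (act 0 (Gen.L 0)).coeff 1 = 1 := by simp [hF]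
  have hγ := eq_zpow_of_map_add (γ := fun i => (act 0 (Gen.L i)).coeff 1) hγ0
    (hM.coeff_one_act_zero_L_add hF)
  refine ⟨a, b, (act 0 (Gen.L 1)).coeff 1, ?_, fun i l => ?_,
    hM.act_M_eq_zero (hM.act_Y_eq_zero hF), hM.act_Y_eq_zero hF⟩
  · exact left_ne_zero_of_mul_eq_one
      (by rw [← hM.coeff_one_act_zero_L_add hF, add_neg_cancel, hγ0])
  · rw [hM.act_L_eq hF i l, hγ i, hF l]
end

section
/- Suppose h: ℤ → ℂ[∂,λ] and e ∈ ℂ, c ∈ ℂ*, satisfy for all i,j ∈ ℤ the identity (λ−μ)·e·c^{i+j} = h_j(∂+λ,μ)·h_i(∂,λ) − h_i(∂+μ,λ)·h_j(∂,μ) in ℂ[∂,λ,μ], and additionally each h_j(∂+λ,μ)·e = h_j(∂,μ)·e (i.e., if e ≠ 0 then each h_j is independent of ∂). Then e = 0. -/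
/-!
Multiplying the bracket identity by `e` and using the shift invariance `h_j(∂+λ,μ) e = h_j(∂,μ) e`
turns its right-hand side into `h_j(∂,μ) h_i(∂,λ) e - h_i(∂,λ) h_j(∂,μ) e = 0`, so
`(λ - μ) e² c^{i+j} = 0`; at `λ = 1`, `μ = 0`, `i = j = 0` this reads `e² = 0`.
-/

theorem bracket_mul_eq_zero_of_shift_invariant {ι R : Type*} [CommRing R] (H : ι → R → R → R)
    (e : R) (hind : ∀ j d l m, H j (d + l) m * e = H j d m * e) (i j : ι) (d l m : R) :
    (H j (d + l) m * H i d l - H i (d + m) l * H j d m) * e = 0 := by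
  calc (H j (d + l) m * H i d l - H i (d + m) l * H j d m) * e
      = H i d l * (H j (d + l) m * e) - H j d m * (H i (d + m) l * e) := by ring
    _ = 0 := by rw [hind, hind]; ring

theorem stmt_14_general (h : ℤ → MvPolynomial (Fin 2) ℂ) (e c : ℂ)
    (hyp : ∀ i j : ℤ, ∀ d l m : ℂ,
      (l - m) * e * c ^ (i + j)
        = MvPolynomial.eval ![d + l, m] (h j) * MvPolynomial.eval ![d, l] (h i)
          - MvPolynomial.eval ![d + m, l] (h i) * MvPolynomial.eval ![d, m] (h j))
    (hind : ∀ j : ℤ, ∀ d l m : ℂ,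
      MvPolynomial.eval ![d + l, m] (h j) * e = MvPolynomial.eval ![d, m] (h j) * e) :
    e = 0 := by
  have hsq := bracket_mul_eq_zero_of_shift_invariant (fun j x y => MvPolynomial.eval ![x, y] (h j))
    e hind 0 0 0 1 0
  rw [← hyp 0 0 0 1 0] at hsq
  simpa using hsq

/-- If h_j ∈ ℂ[∂,λ], e ∈ ℂ, c ∈ ℂ* satisfy
(λ−μ)·e·c^{i+j} = h_j(∂+λ,μ)·h_i(∂,λ) − h_i(∂+μ,λ)·h_j(∂,μ) for all i,j ∈ ℤ
(as polynomials in ∂,λ,μ, equivalently for all complex values), and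
h_j(∂+λ,μ)·e = h_j(∂,μ)·e for all j, then e = 0. -/
theorem stmt_14 (h : ℤ → MvPolynomial (Fin 2) ℂ) (e c : ℂ) (hc : c ≠ 0)
    (hyp : ∀ i j : ℤ, ∀ d l m : ℂ,
      (l - m) * e * c ^ (i + j)
        = MvPolynomial.eval ![d + l, m] (h j) * MvPolynomial.eval ![d, l] (h i)
          - MvPolynomial.eval ![d + m, l] (h i) * MvPolynomial.eval ![d, m] (h j))
    (hind : ∀ j : ℤ, ∀ d l m : ℂ,
      MvPolynomial.eval ![d + l, m] (h j) * e = MvPolynomial.eval ![d, m] (h j) * e) :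
    e = 0 :=
  stmt_14_general h e c hyp hind
end

section
/- Let h: ℤ → ℂ[λ] be a family of one-variable polynomials and c ∈ ℂ* such that ((1/2)λ − μ)·h_{i+j}(λ+μ) = −c^i·μ·h_j(μ) holds in ℂ[λ,μ] for all i,j ∈ ℤ. Then h_i = 0 for all i ∈ ℤ. -/
open Polynomial in
theorem Polynomial.eq_zero_of_forall_mul_eval_eq_zero {R : Type*} [CommRing R] [IsDomain R]
    [Infinite R] {p : R[X]} (hp : ∀ x, x * p.eval x = 0) : p = 0 := by
  have hXp : X * p = 0 := Polynomial.funext fun x => by simpa using hp x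
  exact (mul_eq_zero.mp hXp).resolve_left X_ne_zero

theorem stmt_15_general (h : ℤ → Polynomial ℂ) (c : ℂ)
    (hyp : ∀ i j : ℤ, ∀ l m : ℂ,
      ((1/2) * l - m) * (h (i + j)).eval (l + m) = - c ^ i * m * (h j).eval m) :
    ∀ i : ℤ, h i = 0 := by
  intro i
  refine Polynomial.eq_zero_of_forall_mul_eval_eq_zero fun l => ?_
  have half : (1/2) * l * (h i).eval l = 0 := by simpa using hyp 0 i l 0
  linear_combination 2 * half

/-- If h_i ∈ ℂ[λ] and c ∈ ℂ* satisfy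
((1/2)λ − μ)·h_{i+j}(λ+μ) = −c^i·μ·h_j(μ) in ℂ[λ,μ] for all i,j ∈ ℤ
(equivalently for all complex values of λ,μ), then h_i = 0 for all i. -/
theorem stmt_15 (h : ℤ → Polynomial ℂ) (c : ℂ) (hc : c ≠ 0)
    (hyp : ∀ i j : ℤ, ∀ l m : ℂ,
      ((1/2) * l - m) * (h (i + j)).eval (l + m) = - c ^ i * m * (h j).eval m) :
    ∀ i : ℤ, h i = 0 :=
  stmt_15_general h c hyp
end

section
/- Given a,b ∈ ℂ and c ∈ ℂ*, the assignments L_i λ v = c^i(∂+aλ+b)v, M_i λ v = Y_i λ v = 0 on M = ℂ[∂]v define a conformal module structure over the loop Schrödinger–Virasoro Lie conformal algebra csv; i.e., the compatibility a λ (b μ v) − b μ (a λ v) = [a λ b] λ+μ v holds for all pairs of basis generators. -/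
open Polynomial

/-- The rank-one module action on M = ℂ[∂]v:
L_i λ v = c^i(∂+aλ+b)v, M_i λ v = 0, Y_i λ v = 0 (λ evaluated at `l`). -/
noncomputable def act (a b c : ℂ) (l : ℂ) : Gen → Polynomial ℂ
  | Gen.L i => C (c ^ i) * (X + C (a * l + b))
  | _ => 0

/-!
Since `M_i` and `Y_i` act trivially and every bracket other than `[L_i λ L_j]` lies in the
span of the `M_k, Y_k`, both sides vanish except for two `L`'s, where the compatibility is a
polynomial identity in `∂, λ, μ` once `c ^ (i + j)` is split as `c ^ i * c ^ j` (valid as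
`c ≠ 0`).
-/

section RankOneAction

variable (a b c : ℂ)

@[simp]
lemma act_M (l : ℂ) (i : ℤ) : act a b c l (Gen.M i) = 0 := rfl

@[simp]
lemma act_Y (l : ℂ) (i : ℤ) : act a b c l (Gen.Y i) = 0 := rfl

lemma act_L (l : ℂ) (i : ℤ) : act a b c l (Gen.L i) = C (c ^ i) * (X + C (a * l + b)) := rfl

/-- With `A = ∂ + b`, the compatibility for `L_i, L_j` reduces to
`(A + λ + aμ)(A + aλ) − (A + μ + aλ)(A + aμ) = (λ − μ)(A + a(λ + μ))`. -/
lemma act_L_L_compat (hc : c ≠ 0) (i j : ℤ) (l m : ℂ) :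
    (act a b c m (Gen.L j)).comp (X + C l) * act a b c l (Gen.L i)
      - (act a b c l (Gen.L i)).comp (X + C m) * act a b c m (Gen.L j)
      = C ((X + C (2 * l)).eval (-(l + m))) * act a b c (l + m) (Gen.L (i + j)) := by
  rw [eval_add, eval_X, eval_C]
  simp only [act_L, zpow_add₀ hc, mul_comp, C_comp, add_comp, X_comp, map_mul, map_add, map_neg,
    map_ofNat]
  ring

end RankOneAction

/-- For any a,b ∈ ℂ and c ∈ ℂ*, these assignments define a conformal module over
csv: the compatibility g₁ λ (g₂ μ v) − g₂ μ (g₁ λ v) = [g₁ λ g₂]_{λ+μ} v holds for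
all pairs of generators (note g λ (q(∂)v) = q(∂+λ)·(g λ v) by sesquilinearity,
and [p(∂)·h]_{ν} v = p(−ν)·(h ν v)). -/
theorem stmt_16 (a b c : ℂ) (hc : c ≠ 0) :
    ∀ (g₁ g₂ : Gen) (l m : ℂ),
      (act a b c m g₂).comp (X + C l) * act a b c l g₁
        - (act a b c l g₁).comp (X + C m) * act a b c m g₂
        = (br l g₁ g₂).sum fun h p => C (p.eval (-(l + m))) * act a b c (l + m) h := by
  intro g₁ g₂ l m
  cases g₁ <;> cases g₂
  case L.L i j => rw [br, Finsupp.sum_single_index (by simp), act_L_L_compat a b c hc]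
  all_goals simp [br, Finsupp.sum_single_index, -Finsupp.single_add, -Finsupp.single_mul]
end

section
/- Given a,b ∈ ℂ, the assignments L_i λ v_m = (∂+aλ+b)v_{i+m}, M_i λ v_m = 0, Y_i λ v_m = 0 on V = ⊕_{m∈ℤ} ℂ[∂]v_m define a ℤ-graded conformal module over the loop Schrödinger–Virasoro Lie conformal algebra csv. -/
/-!
Only the generators `L_i` act nontrivially, and a λ-bracket of two generators has an `L`-component
only for `[L_i λ L_j]`; so in every other case both sides of the compatibility vanish. For `L_i, L_j`
both sides are multiples of `v_{i+j+k}`, and their coefficients agree by the identity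
`(∂+λ+aμ+b)(∂+aλ+b) − (∂+μ+aλ+b)(∂+aμ+b) = (λ−μ)(∂+a(λ+μ)+b)`, where `λ − μ` is
`(∂+2λ)` evaluated at `∂ = −(λ+μ)`.
-/

open Polynomial

/-- The action of a generator on the basis vector v_m of V = ⊕_{m∈ℤ} ℂ[∂]v_m:
L_i λ v_m = (∂+aλ+b)v_{i+m}, M_i λ v_m = 0, Y_i λ v_m = 0 (λ evaluated at `l`);
the result is recorded as a finitely supported family of ℂ[∂]-coefficients. -/
noncomputable def actB (a b : ℂ) (l : ℂ) : Gen → ℤ → (ℤ →₀ Polynomial ℂ)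
  | Gen.L i, m => Finsupp.single (i + m) (X + C (a * l + b))
  | _, _ => 0

lemma X_add_C_comp_mul_sub_comp_mul {R : Type*} [CommRing R] (a b l m : R) :
    (X + C (a * m + b)).comp (X + C l) * (X + C (a * l + b))
      - (X + C (a * l + b)).comp (X + C m) * (X + C (a * m + b))
      = C (l - m) * (X + C (a * (l + m) + b)) := by
  simp only [add_comp, X_comp, C_comp]
  simp only [C_add, C_mul, C_sub]
  ring

lemma actB_L (a b l : ℂ) (i m : ℤ) :
    actB a b l (Gen.L i) m = Finsupp.single (i + m) (X + C (a * l + b)) := rfl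

lemma sum_single_eval_smul_actB (a b l x : ℂ) (h : Gen) (p : ℂ[X]) (k : ℤ) :
    ((Finsupp.single h p).sum fun h p => C (p.eval x) • actB a b l h k)
      = C (p.eval x) • actB a b l h k :=
  Finsupp.sum_single_index (by simp)

lemma actB_L_L_compat (a b : ℂ) (i j k : ℤ) (l m : ℂ) :
    ((actB a b m (Gen.L j) k).sum fun n q => (q.comp (X + C l)) • actB a b l (Gen.L i) n)
      - ((actB a b l (Gen.L i) k).sum fun n q => (q.comp (X + C m)) • actB a b m (Gen.L j) n)
      = (br l (Gen.L i) (Gen.L j)).sum fun h p =>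
          (C (p.eval (-(l + m)))) • actB a b (l + m) h k := by
  have hcoeff : (X + C (2 * l)).eval (-(l + m)) = l - m := by
    simp only [eval_add, eval_X, eval_C]
    ring
  simp only [br, sum_single_eval_smul_actB, actB_L]
  rw [Finsupp.sum_single_index (by simp), Finsupp.sum_single_index (by simp)]
  simp only [Finsupp.smul_single, ← Finsupp.single_sub, add_left_comm j i, add_assoc,
    smul_eq_mul, X_add_C_comp_mul_sub_comp_mul, hcoeff]

/-- For any a,b ∈ ℂ, these assignments define a ℤ-graded conformal module over
csv: the action is graded (csv_i sends v_m into ℂ[∂,λ]·v_{i+m}) and the module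
compatibility g₁ λ (g₂ μ v_k) − g₂ μ (g₁ λ v_k) = [g₁ λ g₂]_{λ+μ} v_k holds for
all pairs of generators on every v_k. -/
theorem stmt_17 (a b : ℂ) :
    (∀ (i k : ℤ) (l : ℂ), (actB a b l (Gen.L i) k).support ⊆ {i + k})
    ∧ ∀ (g₁ g₂ : Gen) (k : ℤ) (l m : ℂ),
      ((actB a b m g₂ k).sum fun n q => (q.comp (X + C l)) • actB a b l g₁ n)
        - ((actB a b l g₁ k).sum fun n q => (q.comp (X + C m)) • actB a b m g₂ n)
        = (br l g₁ g₂).sum fun h p => (C (p.eval (-(l + m)))) • actB a b (l + m) h k := by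
  refine ⟨fun i k l => Finsupp.support_single_subset, fun g₁ g₂ k l m => ?_⟩
  cases g₁ <;> cases g₂
  case L.L i j => exact actB_L_L_compat a b i j k l m
  all_goals simp only [br, sum_single_eval_smul_actB]; simp [actB]
end
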